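/- arXiv:2511.15126 — 2 statements merged into one kernel-verified Lean document; each statement's English description precedes it below -/
import Mathlib

section
/- Let R be a commutative ring, let (M_i)_{i ∈ I} be a family of R-modules, and let B be a free R-module. Then the natural R-linear map (∏_{i ∈ I} M_i) ⊗_R B → ∏_{i ∈ I} (M_i ⊗_R B), induced componentwise by (projection to M_i) ⊗ id_B, is injective. -/
open TensorProduct

/-- For a commutative ring `R`, a family of `R`-modules `(M i)_{i ∈ ι}` and a free
`R`-module `B`, the natural map `(∏ i, M i) ⊗[R] B → ∏ i, (M i ⊗[R] B)`, whose `i`-th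
component is `(projection to M i) ⊗ id`, is injective. -/
theorem prod_tensor_free_injective
    (R : Type*) [CommRing R] {ι : Type*} (M : ι → Type*)
    [∀ i, AddCommGroup (M i)] [∀ i, Module R (M i)]
    (B : Type*) [AddCommGroup B] [Module R B] [Module.Free R B] :
    Function.Injective
      (LinearMap.pi (fun i =>
          TensorProduct.map (LinearMap.proj i : (∀ j, M j) →ₗ[R] M i)
            (LinearMap.id : B →ₗ[R] B)) :
        ((∀ i, M i) ⊗[R] B) →ₗ[R] ∀ i, M i ⊗[R] B) := by
  classical
  obtain ⟨κ, b⟩ := Module.Free.exists_basis (R := R) (M := B)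
  set eP : ((∀ i, M i) ⊗[R] B) ≃ₗ[R] (κ →₀ ∀ i, M i) :=
    (TensorProduct.congr (LinearEquiv.refl R (∀ i, M i)) b.repr).trans
      (TensorProduct.finsuppScalarRight R R (∀ i, M i) κ) with heP
  have comm : ∀ (i : ι) (t : ((∀ j, M j) ⊗[R] B)) (k : κ),
      ((TensorProduct.congr (LinearEquiv.refl R (M i)) b.repr).trans
        (TensorProduct.finsuppScalarRight R R (M i) κ))
        (TensorProduct.map (LinearMap.proj i) LinearMap.id t) k
      = (eP t k) i := by
    intro i t k
    induction t using TensorProduct.induction_on with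
    | zero => simp
    | tmul m v =>
        simp [heP, TensorProduct.congr_tmul,
          TensorProduct.finsuppScalarRight_apply_tmul_apply]
    | add a c ha hc =>
        simp only [map_add, Finsupp.add_apply, Pi.add_apply, ha, hc]
  intro x y hxy
  rw [← sub_eq_zero] at hxy ⊢
  rw [← map_sub] at hxy
  set z := x - y with hz
  have hzi : ∀ i, TensorProduct.map (LinearMap.proj i : (∀ j, M j) →ₗ[R] M i)
      (LinearMap.id : B →ₗ[R] B) z = 0 := by
    intro i
    have := congrFun hxy i
    simpa [LinearMap.pi_apply] using this
  have h0 : eP z = 0 := by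
    ext k i
    rw [← comm i z k, hzi i]
    simp
  exact eP.map_eq_zero_iff.mp h0
end

section
/- Let K be a field, let A be a commutative K-algebra that is Jacobson and reduced, and let B be any K-module. Then the natural K-linear map A ⊗_K B → ∏_{m} ((A/m) ⊗_K B), where the product runs over all maximal ideals m of A and the map is induced componentwise by (quotient map A → A/m) ⊗ id_B, is injective. -/
/-!
Since `B` is free over `K`, coordinates in a basis of `B` identify `M ⊗[K] B` with finitely
supported families in `M`, naturally in `M`; so tensoring with `B` preserves the injectivity of
`A → ∏ₘ A ⧸ m`. That map is injective because in a reduced Jacobson ring the intersection of all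
maximal ideals, the Jacobson radical of `⊥`, is the radical ideal `⊥` itself.
-/

open TensorProduct

theorem TensorProduct.equivFinsuppOfBasisRight_rTensor {R M M' N κ : Type*} [CommSemiring R]
    [AddCommMonoid M] [Module R M] [AddCommMonoid M'] [Module R M'] [AddCommMonoid N]
    [Module R N] [DecidableEq κ] (𝒞 : Module.Basis κ R N) (f : M →ₗ[R] M') (x : M ⊗[R] N) :
    equivFinsuppOfBasisRight 𝒞 (f.rTensor N x) =
      Finsupp.mapRange f f.map_zero (equivFinsuppOfBasisRight 𝒞 x) := by
  induction x with
  | zero => simp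
  | tmul m n => ext i; simp
  | add x y hx hy => rw [map_add, map_add, hx, hy, map_add, Finsupp.mapRange_add f.map_add]

theorem Module.Free.injective_pi_rTensor {R M N : Type*} [CommSemiring R] [AddCommMonoid M]
    [Module R M] [AddCommMonoid N] [Module R N] [Module.Free R N] {J : Type*}
    {M' : J → Type*} [∀ j, AddCommMonoid (M' j)] [∀ j, Module R (M' j)]
    (f : ∀ j, M →ₗ[R] M' j) (hf : Function.Injective (LinearMap.pi f)) :
    Function.Injective (LinearMap.pi fun j => (f j).rTensor N) := by
  classical
  let 𝒞 := Module.Free.chooseBasis R N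
  intro x y hxy
  apply (equivFinsuppOfBasisRight 𝒞).injective
  ext i
  refine hf (funext fun j => ?_)
  simpa [equivFinsuppOfBasisRight_rTensor] using
    congr(equivFinsuppOfBasisRight 𝒞 ($hxy j) i)

theorem IsJacobsonRing.injective_pi_quotient_maximalSpectrum (A : Type*) [CommRing A]
    [IsJacobsonRing A] [IsReduced A] :
    Function.Injective (RingHom.pi fun m : MaximalSpectrum A => Ideal.Quotient.mk m.asIdeal) := by
  rw [injective_iff_map_eq_zero]
  intro a ha
  have hjac : a ∈ (⊥ : Ideal A).jacobson :=
    Ideal.mem_sInf.2 fun J ⟨_, hJ⟩ => Ideal.Quotient.eq_zero_iff_mem.1 (congr_fun ha ⟨J, hJ⟩)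
  rwa [IsJacobsonRing.out ‹_› Ideal.isRadical_bot] at hjac

/-- Let `K` be a field, `A` a commutative `K`-algebra that is Jacobson and reduced, and
`B` any `K`-module.  Then the natural `K`-linear map
`A ⊗[K] B → ∏_m ((A/m) ⊗[K] B)` (product over all maximal ideals `m` of `A`, whose `m`-th
component is `(quotient map A → A/m) ⊗ id`) is injective. -/
theorem jacobson_reduced_tensor_injective
    (K : Type*) [Field K] (A : Type*) [CommRing A] [Algebra K A]
    [IsJacobsonRing A] [IsReduced A]
    (B : Type*) [AddCommGroup B] [Module K B] :
    Function.Injective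
      (LinearMap.pi (fun m : MaximalSpectrum A =>
          TensorProduct.map (Ideal.Quotient.mkₐ K m.asIdeal).toLinearMap
            (LinearMap.id : B →ₗ[K] B)) :
        (A ⊗[K] B) →ₗ[K] ∀ m : MaximalSpectrum A, (A ⧸ m.asIdeal) ⊗[K] B) :=
  Module.Free.injective_pi_rTensor _ (IsJacobsonRing.injective_pi_quotient_maximalSpectrum A)
end
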